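/- arXiv:2601.19511 — 3 statements merged into one kernel-verified Lean document; each statement's English description precedes it below -/
import Mathlib

section
/- Let 𝒬 ⊆ 𝔓_c(Ω) be nonempty and (f^Q)_{Q∈𝒬} a 𝒬-consistent family of functions on 𝒳 (each f^Q : 𝒳 → [-∞,∞] satisfies f^Q(X)=f^Q(Y) whenever j_Q(X)=j_Q(Y)). Then the function f(X) := sup_{Q∈𝒬} f^Q(X) is lower 𝒫-sensitive with reduction set 𝒬, i.e., each lower level set {X ∈ 𝒳 : f(X) ≤ r}, r ∈ ℝ, has reduction set 𝒬. -/
open MeasureTheory Filter Set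

variable {Ω : Type*} [MeasurableSpace Ω]

/-- Quasi-sure equality with respect to a family of measures. -/
def QSEq (𝔓 : Set (Measure Ω)) (x y : Ω → ℝ) : Prop := ∀ P ∈ 𝔓, x =ᵐ[P] y

def qsSetoid (𝔓 : Set (Measure Ω)) : Setoid (Ω → ℝ) where
  r := QSEq 𝔓
  iseqv := ⟨fun _ _ _ => EventuallyEq.refl _ _,
    fun h P hP => (h P hP).symm,
    fun h1 h2 P hP => (h1 P hP).trans (h2 P hP)⟩

/-- The robust space `L⁰_c`. -/
def L0c (𝔓 : Set (Measure Ω)) := Quotient (qsSetoid 𝔓)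

def aeSetoid (Q : Measure Ω) : Setoid (Ω → ℝ) where
  r x y := x =ᵐ[Q] y
  iseqv := ⟨fun _ => EventuallyEq.refl _ _, EventuallyEq.symm, EventuallyEq.trans⟩

/-- The space `L⁰_Q` for a single measure. -/
def L0 (Q : Measure Ω) := Quotient (aeSetoid Q)

/-- Probability measures dominated by the family `𝔓` (vanishing on `𝔓`-polar sets). -/
def Pc (𝔓 : Set (Measure Ω)) : Set (Measure Ω) :=
  {Q | IsProbabilityMeasure Q ∧ ∀ N : Set Ω, (∀ P ∈ 𝔓, P N = 0) → Q N = 0}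

abbrev PcM (𝔓 : Set (Measure Ω)) := {Q : Measure Ω // Q ∈ Pc 𝔓}

theorem QSEq.aeEq {𝔓 : Set (Measure Ω)} (Q : PcM 𝔓) {x y : Ω → ℝ}
    (h : QSEq 𝔓 x y) : x =ᵐ[Q.1] y :=
  ae_iff.2 (Q.2.2 _ fun P hP => ae_iff.1 (h P hP))

/-- The map `j_Q : L⁰_c → L⁰_Q`. -/
def jQ {𝔓 : Set (Measure Ω)} (Q : PcM 𝔓) : L0c 𝔓 → L0 Q.1 :=
  Quotient.lift (fun x => Quotient.mk (aeSetoid Q.1) x)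
    (fun _ _ h => Quotient.sound (h.aeEq Q))

/-- The `𝔓`-quasi-sure order on `L⁰_c`. -/
def qsLe {𝔓 : Set (Measure Ω)} : L0c 𝔓 → L0c 𝔓 → Prop :=
  Quotient.lift₂ (fun x y => ∀ P ∈ 𝔓, x ≤ᵐ[P] y)
    (fun _ _ _ _ ha hb => propext
      ⟨fun h P hP => ((ha P hP).symm.le.trans (h P hP)).trans (hb P hP).le,
       fun h P hP => ((ha P hP).le.trans (h P hP)).trans (hb P hP).symm.le⟩)

/-- The `Q`-a.s. order on `L⁰_c`, for `Q ∈ 𝔓_c(Ω)`. -/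
def qLe {𝔓 : Set (Measure Ω)} (Q : PcM 𝔓) : L0c 𝔓 → L0c 𝔓 → Prop :=
  Quotient.lift₂ (fun x y => x ≤ᵐ[Q.1] y)
    (fun _ _ _ _ ha hb => propext
      ⟨fun h => (((ha.aeEq Q).symm.le.trans h)).trans (hb.aeEq Q).le,
       fun h => (((ha.aeEq Q).le.trans h)).trans (hb.aeEq Q).symm.le⟩)

def L0c.add {𝔓 : Set (Measure Ω)} : L0c 𝔓 → L0c 𝔓 → L0c 𝔓 :=
  Quotient.map₂ (fun x y ω => x ω + y ω)
    (fun _ _ ha _ _ hb P hP => by filter_upwards [ha P hP, hb P hP] with ω h1 h2; simp [h1, h2])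

def L0c.const (𝔓 : Set (Measure Ω)) (m : ℝ) : L0c 𝔓 := Quotient.mk (qsSetoid 𝔓) (fun _ => m)

def L0c.smul {𝔓 : Set (Measure Ω)} (c : ℝ) : L0c 𝔓 → L0c 𝔓 :=
  Quotient.map (fun x ω => c * x ω)
    (fun _ _ ha P hP => by filter_upwards [ha P hP] with ω h1; simp [h1])

def L0c.abs {𝔓 : Set (Measure Ω)} : L0c 𝔓 → L0c 𝔓 :=
  Quotient.map (fun x ω => |x ω|)
    (fun _ _ ha P hP => by filter_upwards [ha P hP] with ω h1; simp [h1])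

/-- Multiplication by the indicator of a set `A`. -/
noncomputable def L0c.mulInd {𝔓 : Set (Measure Ω)} (A : Set Ω) : L0c 𝔓 → L0c 𝔓 :=
  Quotient.map (fun x => A.indicator x)
    (fun _ _ ha P hP => by
      filter_upwards [ha P hP] with ω h1
      by_cases h : ω ∈ A <;> simp [Set.indicator, h, h1])

/-- The class of the indicator function of `A`. -/
noncomputable def L0c.ind (𝔓 : Set (Measure Ω)) (A : Set Ω) : L0c 𝔓 :=
  Quotient.mk (qsSetoid 𝔓) (A.indicator fun _ => (1 : ℝ))

/-- The bounded elements: `L^∞_c`. -/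
def Linftyc (𝔓 : Set (Measure Ω)) : Set (L0c 𝔓) :=
  {X | ∃ m : ℝ, 0 < m ∧ qsLe X.abs (L0c.const 𝔓 m)}

/-- Expectation under `R ∈ 𝔓_c(Ω)`. -/
noncomputable def expct {𝔓 : Set (Measure Ω)} (R : PcM 𝔓) : L0c 𝔓 → ℝ :=
  Quotient.lift (fun x => ∫ ω, x ω ∂(R.1))
    (fun _ _ h => integral_congr_ae (h.aeEq R))

/-- `𝒬` is a reduction set for `𝒞 ⊆ 𝒳`. -/
def IsReductionSet (𝔓 : Set (Measure Ω)) (𝒳 𝒞 : Set (L0c 𝔓)) (𝒬 : Set (PcM 𝔓)) : Prop :=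
  𝒬.Nonempty ∧ ∀ X ∈ 𝒳, (X ∈ 𝒞 ↔ ∀ Q ∈ 𝒬, jQ Q X ∈ jQ Q '' 𝒞)

/-- `𝒞 ⊆ 𝒳` is `𝔓`-sensitive. -/
def PSensitive (𝔓 : Set (Measure Ω)) (𝒳 𝒞 : Set (L0c 𝔓)) : Prop :=
  𝒞 = ∅ ∨ ∀ X ∈ 𝒳, (X ∈ 𝒞 ↔ ∀ Q : PcM 𝔓, jQ Q X ∈ jQ Q '' 𝒞)

section Reduction

variable {𝔓 : Set (Measure Ω)} {𝒳 𝒞 : Set (L0c 𝔓)} {𝒬 : Set (PcM 𝔓)}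

theorem isReductionSet_iff :
    IsReductionSet 𝔓 𝒳 𝒞 𝒬 ↔
      𝒬.Nonempty ∧ ∀ X ∈ 𝒳, (∀ Q ∈ 𝒬, jQ Q X ∈ jQ Q '' 𝒞) → X ∈ 𝒞 :=
  and_congr_right fun _ => forall₂_congr fun _ _ =>
    ⟨Iff.mpr, fun h => ⟨fun hX _ _ => mem_image_of_mem _ hX, h⟩⟩

theorem IsReductionSet.mono {𝒬' : Set (PcM 𝔓)} (h : IsReductionSet 𝔓 𝒳 𝒞 𝒬) (h𝒬 : 𝒬 ⊆ 𝒬') :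
    IsReductionSet 𝔓 𝒳 𝒞 𝒬' := by
  rw [isReductionSet_iff] at h ⊢
  exact ⟨h.1.mono h𝒬, fun X hX hj => h.2 X hX fun Q hQ => hj Q (h𝒬 hQ)⟩

theorem IsReductionSet.pSensitive (h : IsReductionSet 𝔓 𝒳 𝒞 𝒬) : PSensitive 𝔓 𝒳 𝒞 := by
  refine Or.inr fun X hX => ?_
  simpa using (h.mono (subset_univ 𝒬)).2 X hX

end Reduction

theorem mem_sublevel_iSup_of_forall_jQ_mem_image {𝔓 : Set (Measure Ω)} {𝒳 : Set (L0c 𝔓)}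
    {𝒬 : Set (PcM 𝔓)} {f : PcM 𝔓 → L0c 𝔓 → EReal}
    (hcons : ∀ Q ∈ 𝒬, ∀ X ∈ 𝒳, ∀ Y ∈ 𝒳, jQ Q X = jQ Q Y → f Q X = f Q Y) {r : EReal}
    {X : L0c 𝔓} (hX : X ∈ 𝒳)
    (hj : ∀ Q ∈ 𝒬, jQ Q X ∈ jQ Q '' {Y | Y ∈ 𝒳 ∧ (⨆ Q ∈ 𝒬, f Q Y) ≤ r}) :
    X ∈ {Y | Y ∈ 𝒳 ∧ (⨆ Q ∈ 𝒬, f Q Y) ≤ r} := by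
  refine ⟨hX, iSup₂_le fun Q hQ => ?_⟩
  obtain ⟨Y, ⟨hY, hYr⟩, hXY⟩ := hj Q hQ
  calc f Q X = f Q Y := hcons Q hQ X hX Y hY hXY.symm
    _ ≤ ⨆ Q ∈ 𝒬, f Q Y := le_iSup₂ (f := fun Q _ => f Q Y) Q hQ
    _ ≤ r := hYr

theorem sup_of_consistent_family_lower_pSensitive_general {Ω : Type*} [MeasurableSpace Ω]
    (𝔓 : Set (Measure Ω))
    (𝒳 : Set (L0c 𝔓))
    (𝒬 : Set (PcM 𝔓)) (h𝒬 : 𝒬.Nonempty)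
    (f : PcM 𝔓 → L0c 𝔓 → EReal)
    (hcons : ∀ Q ∈ 𝒬, ∀ X ∈ 𝒳, ∀ Y ∈ 𝒳, jQ Q X = jQ Q Y → f Q X = f Q Y) :
    ∀ r : ℝ,
      PSensitive 𝔓 𝒳 {X | X ∈ 𝒳 ∧ (⨆ Q ∈ 𝒬, f Q X) ≤ (r : EReal)} ∧
      IsReductionSet 𝔓 𝒳 {X | X ∈ 𝒳 ∧ (⨆ Q ∈ 𝒬, f Q X) ≤ (r : EReal)} 𝒬 := by
  intro r
  have hred : IsReductionSet 𝔓 𝒳 {X | X ∈ 𝒳 ∧ (⨆ Q ∈ 𝒬, f Q X) ≤ (r : EReal)} 𝒬 :=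
    isReductionSet_iff.2
      ⟨h𝒬, fun _ hX => mem_sublevel_iSup_of_forall_jQ_mem_image hcons hX⟩
  exact ⟨hred.pSensitive, hred⟩

theorem sup_of_consistent_family_lower_pSensitive {Ω : Type*} [MeasurableSpace Ω]
    (𝔓 : Set (Measure Ω)) (h𝔓 : 𝔓.Nonempty) (hprob : ∀ P ∈ 𝔓, IsProbabilityMeasure P)
    (𝒳 : Set (L0c 𝔓)) (h𝒳 : 𝒳.Nonempty)
    (𝒬 : Set (PcM 𝔓)) (h𝒬 : 𝒬.Nonempty)
    (f : PcM 𝔓 → L0c 𝔓 → EReal)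
    (hcons : ∀ Q ∈ 𝒬, ∀ X ∈ 𝒳, ∀ Y ∈ 𝒳, jQ Q X = jQ Q Y → f Q X = f Q Y) :
    ∀ r : ℝ,
      PSensitive 𝔓 𝒳 {X | X ∈ 𝒳 ∧ (⨆ Q ∈ 𝒬, f Q X) ≤ (r : EReal)} ∧
      IsReductionSet 𝔓 𝒳 {X | X ∈ 𝒳 ∧ (⨆ Q ∈ 𝒬, f Q X) ≤ (r : EReal)} 𝒬 :=
  sup_of_consistent_family_lower_pSensitive_general 𝔓 𝒳 𝒬 h𝒬 f hcons
end

section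
/- Suppose {𝟙_A : A ∈ ℱ} ⊆ 𝒳. Then every subset of 𝒳 is 𝒫-sensitive if and only if 𝒫 is dominated, i.e., there exists a probability measure Q on (Ω,ℱ) such that every Q-null set is 𝒫-polar (𝒫 ≪ Q). -/
open MeasureTheory Filter Set

variable {Ω : Type*} [MeasurableSpace Ω]

/-!
Pick a measurable polar set `M` of maximal `Q`-mass, where `Q` is the dominating probability.
Every polar set is then `Q`-null outside `M`, so the conditioned measure `R = Q[|Mᶜ]` has exactly
the polar sets as null sets; `j_R` is injective, which makes every set `𝔓`-sensitive. Conversely,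
sensitivity of the indicators of measurable sets other than `𝟙_Ω` produces `Q ∈ 𝔓_c(Ω)` that
cannot identify `𝟙_Ω` with any of them, i.e. every `Q`-null event is polar.
-/

open ProbabilityTheory

/-- The supremum of `Q` over `𝒩` is attained by a countable union, and a member of maximal mass
contains, up to its measurable hull, every other member `Q`-a.e. -/
theorem exists_forall_measure_diff_toMeasurable_eq_zero (Q : Measure Ω) [IsFiniteMeasure Q]
    {𝒩 : Set (Set Ω)} (h𝒩 : ∀ S ⊆ 𝒩, S.Countable → ⋃₀ S ∈ 𝒩) :
    ∃ N₀ ∈ 𝒩, ∀ N ∈ 𝒩, Q (N \ toMeasurable Q N₀) = 0 := by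
  set masses := (fun N => Q N) '' 𝒩
  have hne : masses.Nonempty := ⟨_, _, h𝒩 ∅ (empty_subset _) countable_empty, rfl⟩
  obtain ⟨u, -, hu, hu_mem⟩ := exists_seq_tendsto_sSup hne (OrderTop.bddAbove masses)
  choose N hN hQN using hu_mem
  have hN₀ : ⋃₀ range N ∈ 𝒩 := h𝒩 _ (range_subset_iff.2 hN) (countable_range N)
  have hQN₀ : sSup masses ≤ Q (⋃₀ range N) :=
    le_of_tendsto' hu fun n => hQN n ▸ measure_mono (subset_sUnion_of_mem (mem_range_self n))
  refine ⟨_, hN₀, fun A hA => ?_⟩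
  set M := toMeasurable Q (⋃₀ range N)
  have hunion : A ∪ ⋃₀ range N ∈ 𝒩 := by
    simpa using h𝒩 {A, ⋃₀ range N} (pair_subset hA hN₀) (countable_singleton _ |>.insert A)
  have key : Q M + Q (A \ M) ≤ Q M + 0 :=
    calc Q M + Q (A \ M)
        = Q (⋃₀ range N) + Q (A \ M) := by rw [measure_toMeasurable]
      _ ≤ Q ((A ∪ ⋃₀ range N) ∩ M) + Q ((A ∪ ⋃₀ range N) \ M) := by
          gcongr
          · exact subset_inter subset_union_right (subset_toMeasurable _ _)
          · exact subset_union_left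
      _ = Q (A ∪ ⋃₀ range N) := measure_inter_add_sdiff _ (measurableSet_toMeasurable _ _)
      _ ≤ sSup masses := le_sSup ⟨_, hunion, rfl⟩
      _ ≤ Q M + 0 := by rw [add_zero, measure_toMeasurable]; exact hQN₀
  exact nonpos_iff_eq_zero.1 (ENNReal.le_of_add_le_add_left (measure_ne_top Q M) key)

section Polar

variable {𝔓 : Set (Measure Ω)}

def IsPolar (𝔓 : Set (Measure Ω)) (N : Set Ω) : Prop := ∀ P ∈ 𝔓, P N = 0

theorem IsPolar.mono {N N' : Set Ω} (h : IsPolar 𝔓 N) (hN' : N' ⊆ N) : IsPolar 𝔓 N' :=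
  fun P hP => measure_mono_null hN' (h P hP)

theorem IsPolar.union {N N' : Set Ω} (h : IsPolar 𝔓 N) (h' : IsPolar 𝔓 N') :
    IsPolar 𝔓 (N ∪ N') :=
  fun P hP => measure_union_null (h P hP) (h' P hP)

theorem isPolar_sUnion {S : Set (Set Ω)} (hS : S.Countable) (h : ∀ N ∈ S, IsPolar 𝔓 N) :
    IsPolar 𝔓 (⋃₀ S) :=
  fun P hP => (measure_sUnion_null_iff hS).2 fun N hN => h N hN P hP

section Dominated

variable {Q : Measure Ω}

theorem isPolar_of_measure_eq_zero (hdom : ∀ N, MeasurableSet N → Q N = 0 → IsPolar 𝔓 N)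
    {N : Set Ω} (hN : Q N = 0) : IsPolar 𝔓 N :=
  (hdom _ (measurableSet_toMeasurable Q N) (by rwa [measure_toMeasurable])).mono
    (subset_toMeasurable Q N)

/-- For `P ∈ 𝔓`, the `P`-hull of `N` is measurable and contains `N`, so it misses only a `Q`-null
measurable part of the `Q`-hull of `N`. -/
theorem isPolar_toMeasurable [SFinite Q] (hdom : ∀ N, MeasurableSet N → Q N = 0 → IsPolar 𝔓 N)
    {N : Set Ω} (hN : IsPolar 𝔓 N) : IsPolar 𝔓 (toMeasurable Q N) := by
  intro P hP
  set A := toMeasurable P N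
  have hA : MeasurableSet A := measurableSet_toMeasurable P N
  have hQ : Q (toMeasurable Q N \ A) = 0 := by
    rw [sdiff_eq, Measure.measure_toMeasurable_inter_of_sFinite hA.compl,
      (disjoint_compl_right_iff_subset.2 (subset_toMeasurable P N)).inter_eq, measure_empty]
  have hPA : P A = 0 := by rw [measure_toMeasurable]; exact hN P hP
  rw [← measure_inter_add_sdiff _ hA, hdom _ ((measurableSet_toMeasurable Q N).diff hA) hQ P hP,
    add_zero]
  exact measure_mono_null inter_subset_right hPA

theorem exists_mem_Pc_isPolar_of_measure_eq_zero [IsFiniteMeasure Q]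
    (hdom : ∀ N, MeasurableSet N → Q N = 0 → IsPolar 𝔓 N)
    (huniv : ¬ IsPolar 𝔓 univ) :
    ∃ R ∈ Pc 𝔓, ∀ N, R N = 0 → IsPolar 𝔓 N := by
  obtain ⟨N₀, hN₀, hess⟩ := exists_forall_measure_diff_toMeasurable_eq_zero Q
    (𝒩 := {N | IsPolar 𝔓 N}) fun S hS hc => isPolar_sUnion hc hS
  set M := toMeasurable Q N₀
  have hMm : MeasurableSet Mᶜ := (measurableSet_toMeasurable Q N₀).compl
  have hM : IsPolar 𝔓 M := isPolar_toMeasurable hdom hN₀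
  have hMc : Q Mᶜ ≠ 0 := fun h =>
    huniv (by simpa using hM.union (isPolar_of_measure_eq_zero hdom h))
  refine ⟨Q[|Mᶜ], ⟨cond_isProbabilityMeasure hMc, fun N hN => ?_⟩, fun N hN => ?_⟩
  · rw [cond_apply hMm, inter_comm, ← sdiff_eq, hess N hN, mul_zero]
  · rw [cond_apply hMm] at hN
    have hQ : Q (Mᶜ ∩ N) = 0 :=
      (mul_eq_zero.1 hN).resolve_left (ENNReal.inv_ne_zero.2 (measure_ne_top Q _))
    refine ((isPolar_of_measure_eq_zero hdom hQ).union hM).mono fun ω hω => ?_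
    by_cases hωM : ω ∈ M
    · exact Or.inr hωM
    · exact Or.inl ⟨hωM, hω⟩

end Dominated

theorem indicator_ae_eq_indicator_univ_iff (μ : Measure Ω) (A : Set Ω) :
    A.indicator (fun _ => (1 : ℝ)) =ᵐ[μ] univ.indicator (fun _ => 1) ↔ μ Aᶜ = 0 := by
  rw [Filter.EventuallyEq, ae_iff]
  congr! 2
  ext ω
  by_cases h : ω ∈ A <;> simp [h]

theorem L0c.ind_eq_ind_univ_iff (A : Set Ω) :
    L0c.ind 𝔓 A = L0c.ind 𝔓 univ ↔ IsPolar 𝔓 Aᶜ :=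
  Quotient.eq.trans (forall₂_congr fun P _ => indicator_ae_eq_indicator_univ_iff P A)

theorem jQ_ind_eq_jQ_ind_univ (Q : PcM 𝔓) {A : Set Ω} (hA : Q.1 Aᶜ = 0) :
    jQ Q (L0c.ind 𝔓 A) = jQ Q (L0c.ind 𝔓 univ) :=
  Quotient.sound ((indicator_ae_eq_indicator_univ_iff Q.1 A).2 hA)

theorem jQ_injective {Q : PcM 𝔓} (hQ : ∀ N, Q.1 N = 0 → IsPolar 𝔓 N) :
    Function.Injective (jQ Q) := by
  rintro ⟨x⟩ ⟨y⟩ hxy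
  exact Quotient.sound fun P hP => ae_iff.2 (hQ _ (ae_iff.1 (Quotient.exact hxy)) P hP)

theorem pSensitive_of_jQ_injective (Q : PcM 𝔓) (hQ : Function.Injective (jQ Q))
    (𝒳 𝒞 : Set (L0c 𝔓)) : PSensitive 𝔓 𝒳 𝒞 :=
  Or.inr fun X _ => ⟨fun hX _ => ⟨X, hX, rfl⟩, fun h => by
    obtain ⟨Y, hY, hYX⟩ := h Q
    exact hQ hYX ▸ hY⟩

/-- Sensitivity of the indicators of measurable events other than `𝟙_Ω` yields `Q ∈ 𝔓_c(Ω)`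
under which `𝟙_Ω` is a.s. equal to none of them. -/
theorem exists_mem_Pc_isPolar_of_forall_pSensitive (huniv : ¬ IsPolar 𝔓 univ)
    {𝒳 : Set (L0c 𝔓)} (hind : ∀ A, MeasurableSet A → L0c.ind 𝔓 A ∈ 𝒳)
    (H : ∀ 𝒞 ⊆ 𝒳, PSensitive 𝔓 𝒳 𝒞) :
    ∃ Q ∈ Pc 𝔓, ∀ N, MeasurableSet N → Q N = 0 → IsPolar 𝔓 N := by
  set 𝒞 : Set (L0c 𝔓) := L0c.ind 𝔓 '' {A | MeasurableSet A} \ {L0c.ind 𝔓 univ}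
  have hempty : L0c.ind 𝔓 ∅ ∈ 𝒞 :=
    ⟨⟨∅, .empty, rfl⟩, fun h => huniv (by simpa using (L0c.ind_eq_ind_univ_iff ∅).1 h)⟩
  rcases H 𝒞 (by rintro _ ⟨⟨A, hA, rfl⟩, -⟩; exact hind A hA) with h | h
  · exact absurd h (nonempty_of_mem hempty).ne_empty
  obtain ⟨Q, hQ⟩ : ∃ Q : PcM 𝔓, jQ Q (L0c.ind 𝔓 univ) ∉ jQ Q '' 𝒞 := by
    by_contra! hall
    exact ((h _ (hind _ .univ)).2 hall).2 rfl
  refine ⟨Q.1, Q.2, fun N hN hQN => ?_⟩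
  by_contra hNp
  refine hQ ⟨L0c.ind 𝔓 Nᶜ, ⟨⟨Nᶜ, hN.compl, rfl⟩, ?_⟩, jQ_ind_eq_jQ_ind_univ Q ?_⟩
  · rwa [mem_singleton_iff, L0c.ind_eq_ind_univ_iff, compl_compl]
  · rwa [compl_compl]

end Polar

theorem all_sets_pSensitive_iff_dominated {Ω : Type*} [MeasurableSpace Ω]
    (𝔓 : Set (Measure Ω)) (h𝔓 : 𝔓.Nonempty) (hprob : ∀ P ∈ 𝔓, IsProbabilityMeasure P)
    (𝒳 : Set (L0c 𝔓)) (hind : ∀ A : Set Ω, MeasurableSet A → L0c.ind 𝔓 A ∈ 𝒳) :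
    (∀ 𝒞 : Set (L0c 𝔓), 𝒞 ⊆ 𝒳 → PSensitive 𝔓 𝒳 𝒞) ↔
      ∃ Q : Measure Ω, IsProbabilityMeasure Q ∧
        ∀ N : Set Ω, MeasurableSet N → Q N = 0 → ∀ P ∈ 𝔓, P N = 0 := by
  have huniv : ¬ IsPolar 𝔓 univ := fun h => by
    obtain ⟨P, hP⟩ := h𝔓
    have := hprob P hP
    simpa using h P hP
  constructor
  · intro H
    obtain ⟨Q, hQ, hdom⟩ := exists_mem_Pc_isPolar_of_forall_pSensitive huniv hind H
    exact ⟨Q, hQ.1, hdom⟩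
  · rintro ⟨Q, hQ, hdom⟩ 𝒞 -
    obtain ⟨R, hR, hRdom⟩ := exists_mem_Pc_isPolar_of_measure_eq_zero hdom huniv
    exact pSensitive_of_jQ_injective ⟨R, hR⟩ (jQ_injective hRdom) 𝒳 𝒞
end

section
/- For any one-period market model S of dimension d over (Ω,ℱ) satisfying the robust no-arbitrage condition NA(𝒫,S), there exists a probability measure P in the convex hull of 𝒫 such that NA(P,S) holds. -/
open MeasureTheory Filter Set

variable {Ω : Type*} [MeasurableSpace Ω]

/-- A one-period market model of dimension `d`: initial prices `S0 ∈ ℝ^d` and a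
bounded, measurable, nonnegative terminal price vector `S1`. -/
structure MarketModel (Ω : Type*) [MeasurableSpace Ω] (d : ℕ) where
  S0 : Fin d → ℝ
  S1 : Ω → Fin d → ℝ
  meas : Measurable S1
  bdd : ∃ M : ℝ, ∀ ω i, |S1 ω i| ≤ M
  nonneg0 : ∀ i, 0 ≤ S0 i
  nonneg1 : ∀ ω i, 0 ≤ S1 ω i

/-- The gain `H ΔS = ∑ i, H i (S1 i − S0 i)` of a strategy `H ∈ ℝ^d`. -/
def payoff {Ω : Type*} [MeasurableSpace Ω] {d : ℕ} (S : MarketModel Ω d)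
    (H : Fin d → ℝ) (ω : Ω) : ℝ :=
  ∑ i, H i * (S.S1 ω i - S.S0 i)

/-- The class `[H ΔS]_c` in `L⁰_c`. -/
def payoffC {Ω : Type*} [MeasurableSpace Ω] (𝔓 : Set (Measure Ω)) {d : ℕ}
    (S : MarketModel Ω d) (H : Fin d → ℝ) : L0c 𝔓 :=
  Quotient.mk (qsSetoid 𝔓) (payoff S H)

/-- The robust no-arbitrage condition `NA(𝔓, S)`. -/
def NArob {Ω : Type*} [MeasurableSpace Ω] (𝔓 : Set (Measure Ω)) {d : ℕ}
    (S : MarketModel Ω d) : Prop :=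
  ∀ H : Fin d → ℝ, (∀ P ∈ 𝔓, ∀ᵐ ω ∂P, 0 ≤ payoff S H ω) →
    ∀ P ∈ 𝔓, ∀ᵐ ω ∂P, payoff S H ω = 0

/-- The no-arbitrage condition `NA(P, S)` under a single probability `P`. -/
def NAone {Ω : Type*} [MeasurableSpace Ω] (P : Measure Ω) {d : ℕ}
    (S : MarketModel Ω d) : Prop :=
  ∀ H : Fin d → ℝ, (∀ᵐ ω ∂P, 0 ≤ payoff S H ω) → ∀ᵐ ω ∂P, payoff S H ω = 0

/-- The `𝔓`-superhedging functional, valued in `[-∞,∞]`. -/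
noncomputable def piE {Ω : Type*} [MeasurableSpace Ω] (𝔓 : Set (Measure Ω)) {d : ℕ}
    (S : MarketModel Ω d) (X : L0c 𝔓) : EReal :=
  sInf ((fun r : ℝ => (r : EReal)) ''
    {r : ℝ | ∃ H : Fin d → ℝ, qsLe X ((L0c.const 𝔓 r).add (payoffC 𝔓 S H))})

/-! Let `Z` be the space of strategies whose gain vanishes `𝔓`-quasi-surely and `W` a complement
of `Z` in `ℝ^d`. Under `NA(𝔓, S)` no unit vector of `W` has a quasi-surely nonnegative gain. Each
condition `HΔS ≥ 0 P-a.s.` cuts out a closed set of strategies, so by compactness of the unit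
sphere of `W` already finitely many `P₁, …, Pₙ ∈ 𝔓` exclude every unit vector of `W`; as the cone
of strategies with nonnegative gain under all `Pᵢ` is stable under translation by `Z`, it is
contained in `Z`. The uniform mixture of the `Pᵢ` has the same null sets as the family
`{P₁, …, Pₙ}`, hence satisfies `NA`. -/

theorem MeasureTheory.ae_sum_smul_measure_iff {α ι : Type*} [MeasurableSpace α] [Fintype ι]
    {μ : ι → Measure α} {w : ι → ENNReal} (hw : ∀ i, w i ≠ 0) {p : α → Prop} :
    (∀ᵐ x ∂∑ i, w i • μ i, p x) ↔ ∀ i, ∀ᵐ x ∂μ i, p x := by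
  rw [← Measure.sum_fintype, Measure.ae_sum_iff]
  refine forall_congr' fun i => ?_
  simp only [ae_iff, Measure.smul_apply, smul_eq_mul, mul_eq_zero, hw i, false_or]

theorem Submodule.subset_of_isCompl_of_forall_norm_ne_one {E : Type*} [NormedAddCommGroup E]
    [NormedSpace ℝ E] {Z W : Submodule ℝ E} (hZW : IsCompl Z W) {C : Set E}
    (hsmul : ∀ x ∈ C, ∀ c : ℝ, 0 < c → c • x ∈ C) (hsub : ∀ x ∈ C, ∀ z ∈ Z, x - z ∈ C)
    (hC : ∀ x ∈ C, x ∈ W → ‖x‖ ≠ 1) : C ⊆ Z := by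
  intro x hx
  obtain ⟨z, w, hz, hw, rfl⟩ := Submodule.codisjoint_iff_exists_add_eq.mp hZW.codisjoint x
  have hwC : w ∈ C := by simpa using hsub _ hx z hz
  obtain rfl | hw0 := eq_or_ne w 0
  · simpa using hz
  · exact absurd (norm_smul_inv_norm hw0)
      (hC _ (hsmul w hwC _ (by positivity)) (W.smul_mem _ hw))

namespace MarketModel

variable {d : ℕ} (S : MarketModel Ω d)

theorem payoff_smul (c : ℝ) (H : Fin d → ℝ) (ω : Ω) :
    payoff S (c • H) ω = c * payoff S H ω := by
  simp only [payoff, Pi.smul_apply, smul_eq_mul, Finset.mul_sum, mul_assoc]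

theorem payoff_add (H K : Fin d → ℝ) (ω : Ω) :
    payoff S (H + K) ω = payoff S H ω + payoff S K ω := by
  simp only [payoff, Pi.add_apply, add_mul, Finset.sum_add_distrib]

theorem payoff_sub (H K : Fin d → ℝ) (ω : Ω) :
    payoff S (H - K) ω = payoff S H ω - payoff S K ω := by
  simp only [payoff, Pi.sub_apply, sub_mul, Finset.sum_sub_distrib]

theorem continuous_payoff (ω : Ω) : Continuous fun H => payoff S H ω := by
  unfold payoff
  fun_prop

def nullStrategies (𝔔 : Set (Measure Ω)) : Submodule ℝ (Fin d → ℝ) where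
  carrier := {H | ∀ P ∈ 𝔔, ∀ᵐ ω ∂P, payoff S H ω = 0}
  add_mem' {H K} hH hK P hP := by
    filter_upwards [hH P hP, hK P hP] with ω hHω hKω
    rw [payoff_add, hHω, hKω, add_zero]
  zero_mem' P _ := ae_of_all _ fun ω => by simp [payoff]
  smul_mem' c H hH P hP := by
    filter_upwards [hH P hP] with ω hω
    rw [payoff_smul, hω, mul_zero]

def nonnegStrategies (𝔔 : Set (Measure Ω)) : Set (Fin d → ℝ) :=
  {H | ∀ P ∈ 𝔔, ∀ᵐ ω ∂P, 0 ≤ payoff S H ω}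

variable {S}

theorem nullStrategies_anti {𝔔 𝔓 : Set (Measure Ω)} (h : 𝔔 ⊆ 𝔓) :
    S.nullStrategies 𝔓 ≤ S.nullStrategies 𝔔 :=
  fun _ hH P hP => hH P (h hP)

theorem nonnegStrategies_anti {𝔔 𝔓 : Set (Measure Ω)} (h : 𝔔 ⊆ 𝔓) :
    S.nonnegStrategies 𝔓 ⊆ S.nonnegStrategies 𝔔 :=
  fun _ hH P hP => hH P (h hP)

theorem smul_mem_nonnegStrategies {𝔔 : Set (Measure Ω)} {H : Fin d → ℝ}
    (hH : H ∈ S.nonnegStrategies 𝔔) {c : ℝ} (hc : 0 ≤ c) : c • H ∈ S.nonnegStrategies 𝔔 :=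
  fun P hP => (hH P hP).mono fun ω hω => by
    rw [payoff_smul]
    exact mul_nonneg hc hω

theorem sub_mem_nonnegStrategies {𝔔 : Set (Measure Ω)} {H Z : Fin d → ℝ}
    (hH : H ∈ S.nonnegStrategies 𝔔) (hZ : Z ∈ S.nullStrategies 𝔔) :
    H - Z ∈ S.nonnegStrategies 𝔔 := fun P hP => by
  filter_upwards [hH P hP, hZ P hP] with ω hHω hZω
  rw [payoff_sub, hZω, sub_zero]
  exact hHω

theorem isClosed_nonnegStrategies (𝔔 : Set (Measure Ω)) :
    IsClosed (S.nonnegStrategies 𝔔) := by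
  refine IsSeqClosed.isClosed fun H L hH hHL P hP => ?_
  filter_upwards [ae_all_iff.2 fun n => hH n P hP] with ω hω
  exact ge_of_tendsto' (((continuous_payoff S ω).tendsto L).comp hHL) hω

theorem exists_finite_nonnegStrategies_subset {𝔓 : Set (Measure Ω)} (hNA : NArob 𝔓 S) :
    ∃ T ⊆ 𝔓, T.Finite ∧ S.nonnegStrategies T ⊆ S.nullStrategies 𝔓 := by
  obtain ⟨W, hW⟩ := Submodule.exists_isCompl (S.nullStrategies 𝔓)
  have hK : IsCompact ((W : Set (Fin d → ℝ)) ∩ Metric.sphere 0 1) :=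
    (isCompact_sphere 0 1).inter_left W.closed_of_finiteDimensional
  have hcover : (W : Set (Fin d → ℝ)) ∩ Metric.sphere 0 1 ⊆
      ⋃ P ∈ 𝔓, (S.nonnegStrategies {P})ᶜ := by
    rintro H ⟨hHW, hH1⟩
    by_contra hH
    simp only [mem_iUnion, mem_compl_iff, not_exists, not_not] at hH
    have hHnonneg : H ∈ S.nonnegStrategies 𝔓 := fun P hP => hH P hP P rfl
    have hH0 : H = 0 := (Submodule.disjoint_def.1 hW.disjoint) H (hNA H hHnonneg) hHW
    simp [hH0] at hH1
  obtain ⟨T, hT𝔓, hTfin, hTcover⟩ := hK.elim_finite_subcover_image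
    (fun P _ => (isClosed_nonnegStrategies {P}).isOpen_compl) hcover
  refine ⟨T, hT𝔓, hTfin, Submodule.subset_of_isCompl_of_forall_norm_ne_one hW
    (fun _ hH _ hc => smul_mem_nonnegStrategies hH hc.le)
    (fun _ hH _ hZ => sub_mem_nonnegStrategies hH (nullStrategies_anti hT𝔓 hZ))
    fun _ hH hHW hH1 => ?_⟩
  obtain ⟨P, hPT, hHP⟩ := mem_iUnion₂.1 (hTcover ⟨hHW, mem_sphere_zero_iff_norm.2 hH1⟩)
  exact hHP (nonnegStrategies_anti (singleton_subset_iff.2 hPT) hH)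

theorem NArob_of_nonnegStrategies_subset {T 𝔔 𝔓 : Set (Measure Ω)} (hT𝔔 : T ⊆ 𝔔)
    (h𝔔𝔓 : 𝔔 ⊆ 𝔓) (hT : S.nonnegStrategies T ⊆ S.nullStrategies 𝔓) : NArob 𝔔 S :=
  fun _ hH => nullStrategies_anti h𝔔𝔓 (hT (nonnegStrategies_anti hT𝔔 hH))

theorem NAone_sum_smul_iff {n : ℕ} {Ps : Fin n → Measure Ω} {w : Fin n → ENNReal}
    (hw : ∀ i, w i ≠ 0) : NAone (∑ i, w i • Ps i) S ↔ NArob (range Ps) S := by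
  simp only [NAone, NArob, ae_sum_smul_measure_iff hw, forall_mem_range]

end MarketModel

theorem NA_convex_combination_general {Ω : Type*} [MeasurableSpace Ω]
    (𝔓 : Set (Measure Ω)) (h𝔓 : 𝔓.Nonempty)
    (d : ℕ) (S : MarketModel Ω d) (hNA : NArob 𝔓 S) :
    ∃ (n : ℕ) (w : Fin n → ENNReal) (Ps : Fin n → Measure Ω),
      (∀ i, Ps i ∈ 𝔓) ∧ (∑ i, w i) = 1 ∧ NAone (∑ i, w i • Ps i) S := by
  obtain ⟨P₀, hP₀⟩ := h𝔓
  obtain ⟨T, hT𝔓, hTfin, hT⟩ := S.exists_finite_nonnegStrategies_subset hNA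
  obtain ⟨n, Ps, hPs⟩ := (hTfin.insert P₀).fin_embedding
  have hF𝔓 : insert P₀ T ⊆ 𝔓 := insert_subset hP₀ hT𝔓
  have hn : n ≠ 0 := by
    rintro rfl
    simpa using hPs.symm.subset (mem_insert P₀ T)
  refine ⟨n, fun _ => (n : ENNReal)⁻¹, Ps, fun i => hF𝔓 (hPs ▸ mem_range_self i), ?_, ?_⟩
  · simp [ENNReal.mul_inv_cancel, hn]
  · have hw : ∀ _ : Fin n, (n : ENNReal)⁻¹ ≠ 0 := fun _ => ENNReal.inv_ne_zero.2 (by simp)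
    rw [MarketModel.NAone_sum_smul_iff hw, hPs]
    exact MarketModel.NArob_of_nonnegStrategies_subset (subset_insert P₀ T) hF𝔓 hT

theorem NA_convex_combination {Ω : Type*} [MeasurableSpace Ω]
    (𝔓 : Set (Measure Ω)) (h𝔓 : 𝔓.Nonempty) (hprob : ∀ P ∈ 𝔓, IsProbabilityMeasure P)
    (d : ℕ) (S : MarketModel Ω d) (hNA : NArob 𝔓 S) :
    ∃ (n : ℕ) (w : Fin n → ENNReal) (Ps : Fin n → Measure Ω),
      (∀ i, Ps i ∈ 𝔓) ∧ (∑ i, w i) = 1 ∧ NAone (∑ i, w i • Ps i) S :=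
  NA_convex_combination_general 𝔓 h𝔓 d S hNA
end
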